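/- In the tree-recognition system: if G is a tree and G ⇒_𝓡 H, then H is a tree; and if G is not a tree and G ⇒_𝓡 H, then H is not a tree (G, H TLRGs over 𝓛). -/

import Mathlib

/-! # Rooted graph transformation with relabelling -/

/-- A graph over a label alphabet `(LV, LE)`: finite vertex and edge sets, total
source/target functions, a partial node-labelling function `l`, a total
edge-labelling function `m`, and a partial rootedness function `p`
(`some true` = root node, `some false` = non-root, `none` = undefined). -/
structure GTGraph (LV LE : Type) : Type 1 where
  V : Type
  E : Type
  finV : Finite V
  finE : Finite E
  s : E → V
  t : E → V
  l : V → Option LV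
  m : E → LE
  p : V → Option Bool

namespace GTGraph

variable {LV LE : Type}

def IsTotallyLabelled (G : GTGraph LV LE) : Prop := ∀ v, (G.l v).isSome
def IsTotallyRooted (G : GTGraph LV LE) : Prop := ∀ v, (G.p v).isSome
/-- totally labelled, totally rooted graph -/
def IsTLRG (G : GTGraph LV LE) : Prop := G.IsTotallyLabelled ∧ G.IsTotallyRooted

/-- The number of root nodes `|p⁻¹({1})|`. -/
noncomputable def rootCount (G : GTGraph LV LE) : ℕ := Nat.card {v : G.V // G.p v = some true}

/-- The degree of a node. -/
noncomputable def degree (G : GTGraph LV LE) (v : G.V) : ℕ :=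
  Nat.card {e : G.E // G.s e = v} + Nat.card {e : G.E // G.t e = v}

end GTGraph

/-- Graph morphisms preserve sources, targets, edge labels, and node labels and
rootedness wherever these are defined. -/
structure Morphism {LV LE : Type} (G H : GTGraph LV LE) : Type where
  fV : G.V → H.V
  fE : G.E → H.E
  src : ∀ e, fV (G.s e) = H.s (fE e)
  tgt : ∀ e, fV (G.t e) = H.t (fE e)
  edgeLabel : ∀ e, G.m e = H.m (fE e)
  nodeLabel : ∀ v x, G.l v = some x → H.l (fV v) = some x
  rootedness : ∀ v b, G.p v = some b → H.p (fV v) = some b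

namespace Morphism

variable {LV LE : Type} {G H K : GTGraph LV LE}

def Injective (g : Morphism G H) : Prop := Function.Injective g.fV ∧ Function.Injective g.fE

/-- identity morphism -/
def ident (G : GTGraph LV LE) : Morphism G G where
  fV := id
  fE := id
  src := fun _ => rfl
  tgt := fun _ => rfl
  edgeLabel := fun _ => rfl
  nodeLabel := fun _ _ h => h
  rootedness := fun _ _ h => h

/-- composition of morphisms -/
def comp (g : Morphism G H) (h : Morphism H K) : Morphism G K where
  fV := h.fV ∘ g.fV
  fE := h.fE ∘ g.fE
  src := fun e => by simp [Function.comp, g.src e, h.src (g.fE e)]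
  tgt := fun e => by simp [Function.comp, g.tgt e, h.tgt (g.fE e)]
  edgeLabel := fun e => by simp [Function.comp, ← h.edgeLabel (g.fE e), g.edgeLabel e]
  nodeLabel := fun v x hx => h.nodeLabel _ _ (g.nodeLabel v x hx)
  rootedness := fun v b hb => h.rootedness _ _ (g.rootedness v b hb)

end Morphism

/-- An isomorphism of graphs: a morphism with a two-sided inverse morphism. -/
structure Iso {LV LE : Type} (G H : GTGraph LV LE) : Type where
  toMor : Morphism G H
  invMor : Morphism H G
  leftV : ∀ v, invMor.fV (toMor.fV v) = v
  leftE : ∀ e, invMor.fE (toMor.fE e) = e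
  rightV : ∀ v, toMor.fV (invMor.fV v) = v
  rightE : ∀ e, toMor.fE (invMor.fE e) = e

/-- A rule `⟨L ← K → R⟩`: graphs `L`, `K`, `R` together with inclusion
(injective) morphisms `K ↪ L` and `K ↪ R`.  (In the rooted relabelling setting
`L` and `R` are additionally required to be TLRGs; this requirement is stated
as a hypothesis where needed.) -/
structure Rule (LV LE : Type) : Type 1 where
  L : GTGraph LV LE
  K : GTGraph LV LE
  R : GTGraph LV LE
  incL : Morphism K L
  incR : Morphism K R
  injL : incL.Injective
  injR : incR.Injective

namespace Rule

variable {LV LE : Type} (r : Rule LV LE) (G : GTGraph LV LE)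

/-- The inverse rule `r⁻¹ = ⟨R ← K → L⟩`. -/
def inv (r : Rule LV LE) : Rule LV LE where
  L := r.R
  K := r.K
  R := r.L
  incL := r.incR
  incR := r.incL
  injL := r.injR
  injR := r.injL

/-- The dangling condition: no edge of `G ∖ g(L)` is incident to a node of `g(L ∖ K)`. -/
def Dangling (g : Morphism r.L G) : Prop :=
  ∀ e : G.E, (∀ e' : r.L.E, g.fE e' ≠ e) →
    ∀ v : r.L.V, (∀ k : r.K.V, r.incL.fV k ≠ v) →
      G.s e ≠ g.fV v ∧ G.t e ≠ g.fV v

/-- The match `g` is applicable: it is injective and satisfies the dangling condition. -/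
def Applicable (g : Morphism r.L G) : Prop := g.Injective ∧ r.Dangling G g

/-- the nodes `g(L ∖ K)` deleted by applying `r` via `g` -/
def DelV (g : Morphism r.L G) : Set G.V :=
  {x | ∃ v : r.L.V, (∀ k : r.K.V, r.incL.fV k ≠ v) ∧ g.fV v = x}

/-- the edges `g(L ∖ K)` deleted by applying `r` via `g` -/
def DelE (g : Morphism r.L G) : Set G.E :=
  {x | ∃ e : r.L.E, (∀ k : r.K.E, r.incL.fE k ≠ e) ∧ g.fE e = x}

theorem kept_incL {g : Morphism r.L G} (hinj : g.Injective) (k : r.K.V) :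
    g.fV (r.incL.fV k) ∉ r.DelV G g := by
  rintro ⟨v, hv, heq⟩
  exact hv k (hinj.1 heq).symm

theorem kept_src {g : Morphism r.L G} (h : r.Applicable G g) {e : G.E}
    (he : e ∉ r.DelE G g) : G.s e ∉ r.DelV G g := by
  rintro ⟨v, hv, heq⟩
  by_cases hc : ∃ e', g.fE e' = e
  · obtain ⟨e', rfl⟩ := hc
    by_cases hk : ∃ k, r.incL.fE k = e'
    · obtain ⟨k, rfl⟩ := hk
      have h1 : g.fV (r.L.s (r.incL.fE k)) = G.s (g.fE (r.incL.fE k)) := g.src _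
      have h2 : r.incL.fV (r.K.s k) = r.L.s (r.incL.fE k) := r.incL.src k
      have h3 : g.fV v = g.fV (r.incL.fV (r.K.s k)) := by rw [heq, h2, h1]
      exact hv _ (h.1.1 h3).symm
    · exact he ⟨e', fun k hk' => hk ⟨k, hk'⟩, rfl⟩
  · exact (h.2 e (fun e' he' => hc ⟨e', he'⟩) v hv).1 heq.symm

theorem kept_tgt {g : Morphism r.L G} (h : r.Applicable G g) {e : G.E}
    (he : e ∉ r.DelE G g) : G.t e ∉ r.DelV G g := by
  rintro ⟨v, hv, heq⟩
  by_cases hc : ∃ e', g.fE e' = e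
  · obtain ⟨e', rfl⟩ := hc
    by_cases hk : ∃ k, r.incL.fE k = e'
    · obtain ⟨k, rfl⟩ := hk
      have h1 : g.fV (r.L.t (r.incL.fE k)) = G.t (g.fE (r.incL.fE k)) := g.tgt _
      have h2 : r.incL.fV (r.K.t k) = r.L.t (r.incL.fE k) := r.incL.tgt k
      have h3 : g.fV v = g.fV (r.incL.fV (r.K.t k)) := by rw [heq, h2, h1]
      exact hv _ (h.1.1 h3).symm
    · exact he ⟨e', fun k hk' => hk ⟨k, hk'⟩, rfl⟩
  · exact (h.2 e (fun e' he' => hc ⟨e', he'⟩) v hv).2 heq.symm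

attribute [local instance] Classical.propDecidable

/-- The result graph of applying `r` to `G` via an applicable match `g`:
delete `g(L ∖ K)` (undefining labels/rootedness of images of interface nodes
where they are undefined in `K`), then add `R ∖ K` disjointly, relabelling
(and re-rooting) the images of interface nodes according to `R`. -/
noncomputable def result (g : Morphism r.L G) (h : r.Applicable G g) : GTGraph LV LE where
  V := {x : G.V // x ∉ r.DelV G g} ⊕ {v : r.R.V // ∀ k, r.incR.fV k ≠ v}
  E := {x : G.E // x ∉ r.DelE G g} ⊕ {e : r.R.E // ∀ k, r.incR.fE k ≠ e}
  finV := by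
    haveI := G.finV; haveI := r.R.finV
    infer_instance
  finE := by
    haveI := G.finE; haveI := r.R.finE
    infer_instance
  s := fun e =>
    match e with
    | Sum.inl x => Sum.inl ⟨G.s x.1, r.kept_src G h x.2⟩
    | Sum.inr x =>
        if hk : ∃ k, r.incR.fV k = r.R.s x.1 then
          Sum.inl ⟨g.fV (r.incL.fV hk.choose), r.kept_incL G h.1 _⟩
        else Sum.inr ⟨r.R.s x.1, fun k hk' => hk ⟨k, hk'⟩⟩
  t := fun e =>
    match e with
    | Sum.inl x => Sum.inl ⟨G.t x.1, r.kept_tgt G h x.2⟩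
    | Sum.inr x =>
        if hk : ∃ k, r.incR.fV k = r.R.t x.1 then
          Sum.inl ⟨g.fV (r.incL.fV hk.choose), r.kept_incL G h.1 _⟩
        else Sum.inr ⟨r.R.t x.1, fun k hk' => hk ⟨k, hk'⟩⟩
  l := fun v =>
    match v with
    | Sum.inl x =>
        if hk : ∃ k : r.K.V, r.K.l k = none ∧ g.fV (r.incL.fV k) = x.1 then
          r.R.l (r.incR.fV hk.choose)
        else G.l x.1
    | Sum.inr v => r.R.l v.1
  m := fun e =>
    match e with
    | Sum.inl x => G.m x.1
    | Sum.inr x => r.R.m x.1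
  p := fun v =>
    match v with
    | Sum.inl x =>
        if hk : ∃ k : r.K.V, r.K.p k = none ∧ g.fV (r.incL.fV k) = x.1 then
          r.R.p (r.incR.fV hk.choose)
        else G.p x.1
    | Sum.inr v => r.R.p v.1

/-- Direct derivation `G ⇒_r M`: there is an applicable match `g` such that `M`
is isomorphic to the result of applying `r` to `G` via `g`. -/
def Deriv (r : Rule LV LE) (G M : GTGraph LV LE) : Prop :=
  ∃ (g : Morphism r.L G) (h : r.Applicable G g), Nonempty (Iso (r.result G g h) M)

end Rule

/-- `G ⇒_𝓡 H` for a set of rules. -/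
def GTStep {LV LE : Type} (Rs : Set (Rule LV LE)) (G H : GTGraph LV LE) : Prop :=
  ∃ r ∈ Rs, r.Deriv G H

/-- `G ⇒*_𝓡 H`: the reflexive-transitive closure of `⇒_𝓡`, up to isomorphism. -/
def GTDerivStar {LV LE : Type} (Rs : Set (Rule LV LE)) (G H : GTGraph LV LE) : Prop :=
  Relation.ReflTransGen (GTStep Rs) G H ∨ Nonempty (Iso G H)
/-! ## The tree-recognition system -/

/-- node labels: `□` (square) and `△` (triangle) -/
inductive NodeLab : Type where
  | square : NodeLab
  | tri : NodeLab
deriving DecidableEq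

/-- `L` of rule `r0`: `v1 --□--> v2`, both `□`-labelled, `v1` unrooted, `v2` rooted. -/
abbrev L0 : GTGraph NodeLab Unit where
  V := Fin 2
  E := Unit
  finV := inferInstance
  finE := inferInstance
  s := fun _ => 0
  t := fun _ => 1
  l := fun _ => some .square
  m := fun _ => ()
  p := ![some false, some true]

/-- `K` of rules `r0` and `r1`: the single node `v1`, unlabelled, rootedness undefined. -/
abbrev K0 : GTGraph NodeLab Unit where
  V := Unit
  E := PEmpty
  finV := inferInstance
  finE := inferInstance
  s := PEmpty.elim
  t := PEmpty.elim
  l := fun _ => none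
  m := PEmpty.elim
  p := fun _ => none

/-- `R` of rules `r0` and `r1`: the single node `v1`, labelled `□`, rooted. -/
abbrev R0 : GTGraph NodeLab Unit where
  V := Unit
  E := PEmpty
  finV := inferInstance
  finE := inferInstance
  s := PEmpty.elim
  t := PEmpty.elim
  l := fun _ => some .square
  m := PEmpty.elim
  p := fun _ => some true

def incL0 : Morphism K0 L0 where
  fV := fun _ => 0
  fE := PEmpty.elim
  src := fun e => e.elim
  tgt := fun e => e.elim
  edgeLabel := fun e => e.elim
  nodeLabel := fun _ _ h => nomatch h
  rootedness := fun _ _ h => nomatch h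

def incR0 : Morphism K0 R0 where
  fV := id
  fE := PEmpty.elim
  src := fun e => e.elim
  tgt := fun e => e.elim
  edgeLabel := fun e => e.elim
  nodeLabel := fun _ _ h => nomatch h
  rootedness := fun _ _ h => nomatch h

/-- rule `r0`: prune a rooted `□`-leaf with unrooted `□`-parent, root moves to the parent -/
def r0 : Rule NodeLab Unit where
  L := L0
  K := K0
  R := R0
  incL := incL0
  incR := incR0
  injL := ⟨Function.injective_of_subsingleton _, Function.injective_of_subsingleton _⟩
  injR := ⟨Function.injective_of_subsingleton _, Function.injective_of_subsingleton _⟩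

/-- `L` of rule `r1`: like `L0` but `v1` is labelled `△`. -/
abbrev L1 : GTGraph NodeLab Unit where
  V := Fin 2
  E := Unit
  finV := inferInstance
  finE := inferInstance
  s := fun _ => 0
  t := fun _ => 1
  l := ![some .tri, some .square]
  m := fun _ => ()
  p := ![some false, some true]

def incL1 : Morphism K0 L1 where
  fV := fun _ => 0
  fE := PEmpty.elim
  src := fun e => e.elim
  tgt := fun e => e.elim
  edgeLabel := fun e => e.elim
  nodeLabel := fun _ _ h => nomatch h
  rootedness := fun _ _ h => nomatch h

/-- rule `r1`: prune a rooted `□`-leaf with unrooted `△`-parent, root moves to the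
parent which becomes `□`-labelled -/
def r1 : Rule NodeLab Unit where
  L := L1
  K := K0
  R := R0
  incL := incL1
  incR := incR0
  injL := ⟨Function.injective_of_subsingleton _, Function.injective_of_subsingleton _⟩
  injR := ⟨Function.injective_of_subsingleton _, Function.injective_of_subsingleton _⟩

/-- `L` of rule `r2`: `v1 --□--> v2`, both `□`-labelled, `v1` rooted, `v2` unrooted. -/
abbrev L2 : GTGraph NodeLab Unit where
  V := Fin 2
  E := Unit
  finV := inferInstance
  finE := inferInstance
  s := fun _ => 0
  t := fun _ => 1
  l := fun _ => some .square
  m := fun _ => ()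
  p := ![some true, some false]

/-- `K` of rule `r2`: nodes `v1, v2`, unlabelled, rootedness undefined, no edges. -/
abbrev K2 : GTGraph NodeLab Unit where
  V := Fin 2
  E := PEmpty
  finV := inferInstance
  finE := inferInstance
  s := PEmpty.elim
  t := PEmpty.elim
  l := fun _ => none
  m := PEmpty.elim
  p := fun _ => none

/-- `R` of rule `r2`: `v1 --□--> v2`, `v1` labelled `△` and unrooted, `v2` labelled `□`
and rooted. -/
abbrev R2 : GTGraph NodeLab Unit where
  V := Fin 2
  E := Unit
  finV := inferInstance
  finE := inferInstance
  s := fun _ => 0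
  t := fun _ => 1
  l := ![some .tri, some .square]
  m := fun _ => ()
  p := ![some false, some true]

def incL2 : Morphism K2 L2 where
  fV := id
  fE := PEmpty.elim
  src := fun e => e.elim
  tgt := fun e => e.elim
  edgeLabel := fun e => e.elim
  nodeLabel := fun _ _ h => nomatch h
  rootedness := fun _ _ h => nomatch h

def incR2 : Morphism K2 R2 where
  fV := id
  fE := PEmpty.elim
  src := fun e => e.elim
  tgt := fun e => e.elim
  edgeLabel := fun e => e.elim
  nodeLabel := fun _ _ h => nomatch h
  rootedness := fun _ _ h => nomatch h

/-- rule `r2`: push the root one step down an edge, marking the old position `△` -/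
def r2 : Rule NodeLab Unit where
  L := L2
  K := K2
  R := R2
  incL := incL2
  incR := incR2
  injL := ⟨Function.injective_id, Function.injective_of_subsingleton _⟩
  injR := ⟨Function.injective_id, Function.injective_of_subsingleton _⟩

/-- the rule set of the tree-recognition system -/
def TreeRules : Set (Rule NodeLab Unit) := {r0, r1, r2}

/-! ## Trees -/

/-- `IsUndirWalk G v l w`: `l` is an undirected walk from `v` to `w` in `G`;
each step is an edge together with a boolean telling in which direction it is
traversed. -/
def IsUndirWalk {LV LE : Type} (G : GTGraph LV LE) : G.V → List (G.E × Bool) → G.V → Prop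
  | v, [], w => v = w
  | v, (e, true) :: rest, w => G.s e = v ∧ IsUndirWalk G (G.t e) rest w
  | v, (e, false) :: rest, w => G.t e = v ∧ IsUndirWalk G (G.s e) rest w

/-- connectedness via undirected walks -/
def IsConnectedGraph {LV LE : Type} (G : GTGraph LV LE) : Prop :=
  ∀ v w : G.V, ∃ l, IsUndirWalk G v l w

/-- an undirected cycle: a non-empty closed undirected walk without repeated edges -/
def HasUndirCycle {LV LE : Type} (G : GTGraph LV LE) : Prop :=
  ∃ (v : G.V) (l : List (G.E × Bool)), l ≠ [] ∧ IsUndirWalk G v l v ∧ (l.map Prod.fst).Nodup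

/-- a tree: non-empty, connected, no undirected cycles, and every node has at
most one incoming edge -/
def IsTree {LV LE : Type} (G : GTGraph LV LE) : Prop :=
  Nonempty G.V ∧ IsConnectedGraph G ∧ ¬ HasUndirCycle G ∧
    ∀ v : G.V, Nat.card {e : G.E // G.t e = v} ≤ 1

/-- an input graph: a TLRG with exactly one root node, all nodes labelled `□`
(all edges are `□`-labelled since `Unit` is the edge alphabet) -/
def IsInputGraph (G : GTGraph NodeLab Unit) : Prop :=
  G.IsTLRG ∧ (∀ v, G.l v = some .square) ∧ G.rootCount = 1

/-- no rule of `Rs` is applicable to `H` -/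
def InNormalForm {LV LE : Type} (Rs : Set (Rule LV LE)) (H : GTGraph LV LE) : Prop :=
  ¬ ∃ r ∈ Rs, ∃ g : Morphism r.L H, r.Applicable H g

/-! Rules `r0` and `r1` delete an edge `e₀` together with its target; the dangling condition
makes that target a leaf, touched by no edge other than `e₀`. Deleting a leaf changes neither
connectedness nor acyclicity, nor the in-degree of any other node, so `G` is a tree iff `G` without
the leaf is one. Rule `r2` only relabels and replaces an edge by a parallel copy, so its result has
the same underlying directed multigraph as `G`. -/

section Shape

variable {LV LE : Type}

structure ShapeHom (G H : GTGraph LV LE) where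
  fV : G.V → H.V
  fE : G.E → H.E
  src : ∀ e, fV (G.s e) = H.s (fE e)
  tgt : ∀ e, fV (G.t e) = H.t (fE e)

variable {G H : GTGraph LV LE}

theorem IsUndirWalk.map (f : ShapeHom G H) :
    ∀ {v w : G.V} {l : List (G.E × Bool)}, IsUndirWalk G v l w →
      IsUndirWalk H (f.fV v) (l.map fun p => (f.fE p.1, p.2)) (f.fV w)
  | _, _, [], hl => congrArg f.fV hl
  | _, _, (_, true) :: _, ⟨h₁, h₂⟩ => ⟨by rw [← f.src, h₁], by rw [← f.tgt]; exact h₂.map f⟩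
  | _, _, (_, false) :: _, ⟨h₁, h₂⟩ => ⟨by rw [← f.tgt, h₁], by rw [← f.src]; exact h₂.map f⟩

theorem IsUndirWalk.append {G : GTGraph LV LE} :
    ∀ {u v w : G.V} {l₁ l₂ : List (G.E × Bool)},
      IsUndirWalk G u l₁ v → IsUndirWalk G v l₂ w → IsUndirWalk G u (l₁ ++ l₂) w
  | _, _, _, [], _, rfl, h => h
  | _, _, _, (_, true) :: _, _, ⟨h₁, h₂⟩, h => ⟨h₁, h₂.append h⟩
  | _, _, _, (_, false) :: _, _, ⟨h₁, h₂⟩, h => ⟨h₁, h₂.append h⟩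

theorem HasUndirCycle.map (f : ShapeHom G H) (hf : Function.Injective f.fE) :
    HasUndirCycle G → HasUndirCycle H := by
  rintro ⟨v, l, hne, hl, hnd⟩
  refine ⟨f.fV v, l.map fun p => (f.fE p.1, p.2), by simpa using hne, hl.map f, ?_⟩
  simpa [Function.comp_def] using hnd.map hf

theorem IsConnectedGraph.map (f : ShapeHom G H) (hf : Function.Surjective f.fV)
    (hG : IsConnectedGraph G) : IsConnectedGraph H := by
  intro v w
  obtain ⟨v, rfl⟩ := hf v
  obtain ⟨w, rfl⟩ := hf w
  obtain ⟨l, hl⟩ := hG v w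
  exact ⟨_, hl.map f⟩

structure ShapeEquiv (G H : GTGraph LV LE) where
  eV : G.V ≃ H.V
  eE : G.E ≃ H.E
  src : ∀ e, eV (G.s e) = H.s (eE e)
  tgt : ∀ e, eV (G.t e) = H.t (eE e)

namespace ShapeEquiv

def toShapeHom (q : ShapeEquiv G H) : ShapeHom G H := ⟨q.eV, q.eE, q.src, q.tgt⟩

def symm (q : ShapeEquiv G H) : ShapeEquiv H G where
  eV := q.eV.symm
  eE := q.eE.symm
  src e := q.eV.injective (by rw [q.src, Equiv.apply_symm_apply, Equiv.apply_symm_apply])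
  tgt e := q.eV.injective (by rw [q.tgt, Equiv.apply_symm_apply, Equiv.apply_symm_apply])

theorem card_inEdges (q : ShapeEquiv G H) (v : G.V) :
    Nat.card {e : H.E // H.t e = q.eV v} = Nat.card {e : G.E // G.t e = v} :=
  Nat.card_congr (q.eE.subtypeEquiv fun e => by rw [← q.tgt, q.eV.injective.eq_iff]).symm

theorem isTree (q : ShapeEquiv G H) (hG : IsTree G) : IsTree H := by
  obtain ⟨⟨v⟩, hconn, hacyc, hdeg⟩ := hG
  refine ⟨⟨q.eV v⟩, hconn.map q.toShapeHom q.eV.surjective,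
    fun hc => hacyc (hc.map q.symm.toShapeHom q.eE.symm.injective), fun v => ?_⟩
  rw [← q.eV.apply_symm_apply v, q.card_inEdges]
  exact hdeg _

theorem isTree_iff (q : ShapeEquiv G H) : IsTree G ↔ IsTree H := ⟨q.isTree, q.symm.isTree⟩

end ShapeEquiv

def Iso.toShapeEquiv (i : Iso G H) : ShapeEquiv G H where
  eV := ⟨i.toMor.fV, i.invMor.fV, i.leftV, i.rightV⟩
  eE := ⟨i.toMor.fE, i.invMor.fE, i.leftE, i.rightE⟩
  src := i.toMor.src
  tgt := i.toMor.tgt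

end Shape

namespace GTGraph

variable {LV LE : Type} {G : GTGraph LV LE} {e₀ : G.E}

structure IsLeafEdge (G : GTGraph LV LE) (e₀ : G.E) : Prop where
  src_ne : ∀ e, G.s e ≠ G.t e₀
  eq_of_tgt_eq : ∀ e, G.t e = G.t e₀ → e = e₀

def delLeaf (G : GTGraph LV LE) (e₀ : G.E) (h : G.IsLeafEdge e₀) : GTGraph LV LE where
  V := {v : G.V // v ≠ G.t e₀}
  E := {e : G.E // e ≠ e₀}
  finV := by have := G.finV; infer_instance
  finE := by have := G.finE; infer_instance
  s e := ⟨G.s e.1, h.src_ne e.1⟩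
  t e := ⟨G.t e.1, fun he => e.2 (h.eq_of_tgt_eq e.1 he)⟩
  l v := G.l v.1
  m e := G.m e.1
  p v := G.p v.1

variable (h : G.IsLeafEdge e₀)
include h

theorem IsLeafEdge.tgt_ne {e : G.E} (he : e ≠ e₀) : G.t e ≠ G.t e₀ :=
  fun h' => he (h.eq_of_tgt_eq e h')

def delLeafIncl : ShapeHom (G.delLeaf e₀ h) G :=
  ⟨Subtype.val, Subtype.val, fun _ => rfl, fun _ => rfl⟩

open Classical in
noncomputable def leafRetract (v : G.V) : (G.delLeaf e₀ h).V :=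
  if hv : v = G.t e₀ then ⟨G.s e₀, h.src_ne e₀⟩ else ⟨v, hv⟩

theorem leafRetract_tgt : leafRetract h (G.t e₀) = ⟨G.s e₀, h.src_ne e₀⟩ := dif_pos rfl

theorem leafRetract_of_ne {v : G.V} (hv : v ≠ G.t e₀) : leafRetract h v = ⟨v, hv⟩ := dif_neg hv

theorem exists_walks_leafRetract (v : G.V) :
    (∃ l, IsUndirWalk G v l (leafRetract h v).1) ∧ ∃ l, IsUndirWalk G (leafRetract h v).1 l v := by
  by_cases hv : v = G.t e₀
  · subst hv
    rw [leafRetract_tgt]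
    exact ⟨⟨[(e₀, false)], rfl, rfl⟩, ⟨[(e₀, true)], rfl, rfl⟩⟩
  · rw [leafRetract_of_ne h hv]
    exact ⟨⟨[], rfl⟩, ⟨[], rfl⟩⟩

theorem card_inEdges_delLeaf (v : (G.delLeaf e₀ h).V) :
    Nat.card {e // (G.delLeaf e₀ h).t e = v} = Nat.card {e // G.t e = v.1} :=
  Nat.card_congr
    { toFun e := ⟨e.1.1, congrArg Subtype.val e.2⟩
      invFun e := ⟨⟨e.1, fun he => v.2 (by rw [← e.2, he])⟩, Subtype.ext e.2⟩
      left_inv _ := rfl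
      right_inv _ := rfl }

end GTGraph

section LeafDeletion

open GTGraph

variable {LV LE : Type} {G : GTGraph LV LE} {e₀ : G.E} (h : G.IsLeafEdge e₀)
include h

theorem IsUndirWalk.exists_map_leafRetract :
    ∀ {v w : G.V} {l : List (G.E × Bool)}, IsUndirWalk G v l w →
      ∃ l', IsUndirWalk (G.delLeaf e₀ h) (leafRetract h v) l' (leafRetract h w)
  | _, _, [], rfl => ⟨[], rfl⟩
  | _, _, (e, true) :: _, ⟨rfl, hl⟩ => by
    obtain ⟨l', hl'⟩ := hl.exists_map_leafRetract
    by_cases he : e = e₀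
    · subst he
      rw [leafRetract_tgt] at hl'
      exact ⟨l', by rwa [leafRetract_of_ne h (h.src_ne _)]⟩
    · rw [leafRetract_of_ne h (h.tgt_ne he)] at hl'
      exact ⟨(⟨e, he⟩, true) :: l', (leafRetract_of_ne h (h.src_ne e)).symm, hl'⟩
  | _, _, (e, false) :: _, ⟨rfl, hl⟩ => by
    obtain ⟨l', hl'⟩ := hl.exists_map_leafRetract
    rw [leafRetract_of_ne h (h.src_ne e)] at hl'
    by_cases he : e = e₀
    · subst he
      exact ⟨l', by rwa [leafRetract_tgt]⟩
    · exact ⟨(⟨e, he⟩, false) :: l', (leafRetract_of_ne h (h.tgt_ne he)).symm, hl'⟩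

theorem IsUndirWalk.lift_delLeaf :
    ∀ {v w : G.V} {l : List (G.E × Bool)} (hv : v ≠ G.t e₀), IsUndirWalk G v l w →
      (∀ p ∈ l, p.1 ≠ e₀) → ∃ (hw : w ≠ G.t e₀) (l' : List ((G.delLeaf e₀ h).E × Bool)),
        IsUndirWalk (G.delLeaf e₀ h) ⟨v, hv⟩ l' ⟨w, hw⟩ ∧ l'.map (fun p => (p.1.1, p.2)) = l
  | _, _, [], hv, rfl, _ => ⟨hv, [], rfl, rfl⟩
  | _, _, (e, true) :: _, _, ⟨rfl, hl⟩, hfree => by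
    have he : e ≠ e₀ := hfree _ List.mem_cons_self
    obtain ⟨hw, l', hl', rfl⟩ := hl.lift_delLeaf (h.tgt_ne he) fun p hp => hfree p (.tail _ hp)
    exact ⟨hw, (⟨e, he⟩, true) :: l', ⟨rfl, hl'⟩, rfl⟩
  | _, _, (e, false) :: _, _, ⟨rfl, hl⟩, hfree => by
    have he : e ≠ e₀ := hfree _ List.mem_cons_self
    obtain ⟨hw, l', hl', rfl⟩ := hl.lift_delLeaf (h.src_ne e) fun p hp => hfree p (.tail _ hp)
    exact ⟨hw, (⟨e, he⟩, false) :: l', ⟨rfl, hl'⟩, rfl⟩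

theorem IsUndirWalk.step_from_leaf {e : G.E} {b : Bool} {w : G.V} {l : List (G.E × Bool)}
    (hl : IsUndirWalk G (G.t e₀) ((e, b) :: l) w) : e = e₀ ∧ b = false := by
  cases b
  · exact ⟨h.eq_of_tgt_eq e hl.1, rfl⟩
  · exact (h.src_ne e hl.1).elim

theorem IsUndirWalk.avoids_of_nodup :
    ∀ {v w : G.V} {l : List (G.E × Bool)}, IsUndirWalk G v l w → v ≠ G.t e₀ → w ≠ G.t e₀ →
      (l.map Prod.fst).Nodup → ∀ p ∈ l, p.1 ≠ e₀
  | _, _, [], _, _, _, _ => by simp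
  | _, _, (e, false) :: _, ⟨rfl, hl⟩, hv, hw, hnd => by
    have he : e ≠ e₀ := fun he => hv (congrArg G.t he)
    rw [List.map_cons, List.nodup_cons] at hnd
    rintro p (_ | ⟨_, hp⟩)
    · exact he
    · exact hl.avoids_of_nodup (h.src_ne e) hw hnd.2 p hp
  | _, _, (e, true) :: l, ⟨rfl, hl⟩, _, hw, hnd => by
    rw [List.map_cons, List.nodup_cons] at hnd
    -- having entered the leaf along `e₀`, the walk can only leave it along `e₀` again
    have he : e ≠ e₀ := by
      rintro rfl
      match l, hl with
      | [], hl => exact hw hl.symm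
      | _ :: _, hl =>
        obtain ⟨rfl, -⟩ := hl.step_from_leaf h
        exact hnd.1 List.mem_cons_self
    rintro p (_ | ⟨_, hp⟩)
    · exact he
    · exact hl.avoids_of_nodup (h.tgt_ne he) hw hnd.2 p hp

theorem IsConnectedGraph.delLeaf (hG : IsConnectedGraph G) :
    IsConnectedGraph (G.delLeaf e₀ h) := by
  rintro ⟨v, hv⟩ ⟨w, hw⟩
  obtain ⟨l, hl⟩ := hG v w
  simpa only [leafRetract_of_ne h hv, leafRetract_of_ne h hw] using hl.exists_map_leafRetract h

theorem IsConnectedGraph.of_delLeaf (hD : IsConnectedGraph (G.delLeaf e₀ h)) :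
    IsConnectedGraph G := by
  intro v w
  obtain ⟨⟨l₁, hl₁⟩, -⟩ := exists_walks_leafRetract h v
  obtain ⟨-, ⟨l₃, hl₃⟩⟩ := exists_walks_leafRetract h w
  obtain ⟨l₂, hl₂⟩ := hD (leafRetract h v) (leafRetract h w)
  exact ⟨_, (hl₁.append (hl₂.map (delLeafIncl h))).append hl₃⟩

theorem not_hasUndirCycle_of_delLeaf (hD : ¬ HasUndirCycle (G.delLeaf e₀ h)) :
    ¬ HasUndirCycle G := by
  rintro ⟨v, l, hne, hl, hnd⟩
  by_cases hv : v = G.t e₀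
  · subst hv
    obtain ⟨⟨e, b⟩, l, rfl⟩ := List.exists_cons_of_ne_nil hne
    obtain ⟨he, rfl⟩ := hl.step_from_leaf h
    subst e
    rw [List.map_cons, List.nodup_cons] at hnd
    have hfree : ∀ p ∈ l, p.1 ≠ e₀ := fun p hp he =>
      hnd.1 (by simpa [he] using List.mem_map_of_mem (f := Prod.fst) hp)
    obtain ⟨hw, -⟩ := hl.2.lift_delLeaf h (h.src_ne e₀) hfree
    exact hw rfl
  · obtain ⟨_, l', hl', rfl⟩ := hl.lift_delLeaf h hv (hl.avoids_of_nodup h hv hv hnd)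
    refine hD ⟨⟨v, hv⟩, l', by simpa using hne, hl', ?_⟩
    rw [List.map_map] at hnd
    exact .of_map (fun e : (G.delLeaf e₀ h).E => (e.1 : G.E)) (by rwa [List.map_map])

theorem isTree_delLeaf_iff : IsTree (G.delLeaf e₀ h) ↔ IsTree G := by
  constructor
  · rintro ⟨-, hconn, hacyc, hdeg⟩
    refine ⟨⟨G.t e₀⟩, IsConnectedGraph.of_delLeaf h hconn, not_hasUndirCycle_of_delLeaf h hacyc,
      fun v => ?_⟩
    by_cases hv : v = G.t e₀
    · subst hv
      have : Subsingleton {e // G.t e = G.t e₀} :=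
        ⟨fun a b => Subtype.ext ((h.eq_of_tgt_eq _ a.2).trans (h.eq_of_tgt_eq _ b.2).symm)⟩
      exact Finite.card_le_one_iff_subsingleton.mpr this
    · exact card_inEdges_delLeaf h ⟨v, hv⟩ ▸ hdeg ⟨v, hv⟩
  · rintro ⟨-, hconn, hacyc, hdeg⟩
    exact ⟨⟨⟨G.s e₀, h.src_ne e₀⟩⟩, IsConnectedGraph.delLeaf h hconn,
      fun hc => hacyc (hc.map (delLeafIncl h) Subtype.val_injective),
      fun v => (card_inEdges_delLeaf h v).trans_le (hdeg v.1)⟩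

end LeafDeletion

namespace Rule

variable {LV LE : Type} {r : Rule LV LE} {G : GTGraph LV LE} {g : Morphism r.L G}

theorem result_s_inr (h : r.Applicable G g) (x : {e : r.R.E // ∀ k, r.incR.fE k ≠ e}) {k : r.K.V}
    (hk : r.incR.fV k = r.R.s x.1) :
    (r.result G g h).s (.inr x) = .inl ⟨g.fV (r.incL.fV k), r.kept_incL G h.1 k⟩ := by
  have hex : ∃ k, r.incR.fV k = r.R.s x.1 := ⟨k, hk⟩
  simp only [result, dif_pos hex, r.injR.1 (hex.choose_spec.trans hk.symm)]

theorem result_t_inr (h : r.Applicable G g) (x : {e : r.R.E // ∀ k, r.incR.fE k ≠ e}) {k : r.K.V}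
    (hk : r.incR.fV k = r.R.t x.1) :
    (r.result G g h).t (.inr x) = .inl ⟨g.fV (r.incL.fV k), r.kept_incL G h.1 k⟩ := by
  have hex : ∃ k, r.incR.fV k = r.R.t x.1 := ⟨k, hk⟩
  simp only [result, dif_pos hex, r.injR.1 (hex.choose_spec.trans hk.symm)]

theorem delE_eq_singleton {e₀ : r.L.E} (hdel : ∀ e, (∀ k, r.incL.fE k ≠ e) ↔ e = e₀) :
    r.DelE G g = {g.fE e₀} := by
  ext x
  simp only [DelE, hdel, Set.mem_ofPred_eq, Set.mem_singleton_iff]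
  exact ⟨fun ⟨_, rfl, hx⟩ => hx.symm, fun hx => ⟨e₀, rfl, hx.symm⟩⟩

structure PrunesLeaf (r : Rule LV LE) (e₀ : r.L.E) : Prop where
  src_ne_tgt : r.L.s e₀ ≠ r.L.t e₀
  deleted_node_iff : ∀ v, (∀ k, r.incL.fV k ≠ v) ↔ v = r.L.t e₀
  deleted_edge_iff : ∀ e, (∀ k, r.incL.fE k ≠ e) ↔ e = e₀
  no_new_node : ∀ v, ∃ k, r.incR.fV k = v
  no_new_edge : ∀ e, ∃ k, r.incR.fE k = e

structure ReplacesEdge (r : Rule LV LE) (e₀ : r.L.E) (e₁ : r.R.E) : Prop where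
  no_deleted_node : ∀ v, ∃ k, r.incL.fV k = v
  deleted_edge_iff : ∀ e, (∀ k, r.incL.fE k ≠ e) ↔ e = e₀
  no_new_node : ∀ v, ∃ k, r.incR.fV k = v
  new_edge_iff : ∀ e, (∀ k, r.incR.fE k ≠ e) ↔ e = e₁
  src : ∃ k, r.incL.fV k = r.L.s e₀ ∧ r.incR.fV k = r.R.s e₁
  tgt : ∃ k, r.incL.fV k = r.L.t e₀ ∧ r.incR.fV k = r.R.t e₁

namespace PrunesLeaf

variable {e₀ : r.L.E} (hr : r.PrunesLeaf e₀)
include hr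

theorem delV_eq_singleton : r.DelV G g = {G.t (g.fE e₀)} := by
  ext x
  simp only [DelV, hr.deleted_node_iff, Set.mem_ofPred_eq, Set.mem_singleton_iff, ← g.tgt]
  exact ⟨fun ⟨_, rfl, hx⟩ => hx.symm, fun hx => ⟨_, rfl, hx.symm⟩⟩

theorem isLeafEdge (h : r.Applicable G g) : G.IsLeafEdge (g.fE e₀) where
  src_ne e := by
    by_cases he : e ∈ r.DelE G g
    · rw [delE_eq_singleton hr.deleted_edge_iff] at he
      rw [he, ← g.src, ← g.tgt]
      exact h.1.1.ne hr.src_ne_tgt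
    · simpa [hr.delV_eq_singleton] using r.kept_src G h he
  eq_of_tgt_eq e he := by
    by_contra hne
    have hkept : e ∉ r.DelE G g := by simpa [delE_eq_singleton hr.deleted_edge_iff] using hne
    exact r.kept_tgt G h hkept (by simp [hr.delV_eq_singleton, he])

def shapeEquiv (h : r.Applicable G g) :
    ShapeEquiv (G.delLeaf (g.fE e₀) (hr.isLeafEdge h)) (r.result G g h) :=
  have : IsEmpty {v : r.R.V // ∀ k, r.incR.fV k ≠ v} :=
    ⟨fun ⟨v, hv⟩ => (hr.no_new_node v).elim hv⟩
  have : IsEmpty {e : r.R.E // ∀ k, r.incR.fE k ≠ e} :=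
    ⟨fun ⟨e, he⟩ => (hr.no_new_edge e).elim he⟩
  { eV := (Equiv.subtypeEquivRight fun x => by simp [hr.delV_eq_singleton]).trans
      (Equiv.sumEmpty _ _).symm
    eE := (Equiv.subtypeEquivRight fun x => by simp [delE_eq_singleton hr.deleted_edge_iff]).trans
      (Equiv.sumEmpty _ _).symm
    src _ := rfl
    tgt _ := rfl }

theorem isTree_result_iff (h : r.Applicable G g) : IsTree (r.result G g h) ↔ IsTree G :=
  (hr.shapeEquiv h).isTree_iff.symm.trans (isTree_delLeaf_iff _)

end PrunesLeaf

namespace ReplacesEdge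

variable {e₀ : r.L.E} {e₁ : r.R.E} (hr : r.ReplacesEdge e₀ e₁) (h : r.Applicable G g)
include hr h

noncomputable def shapeEquiv : ShapeEquiv (r.result G g h) G :=
  have : IsEmpty {v : r.R.V // ∀ k, r.incR.fV k ≠ v} :=
    ⟨fun ⟨v, hv⟩ => (hr.no_new_node v).elim hv⟩
  have hnotDel : ∀ x, x ∉ r.DelV G g := fun _ ⟨v, hv, _⟩ => (hr.no_deleted_node v).elim hv
  have hx₁ : ∀ x : {e : r.R.E // ∀ k, r.incR.fE k ≠ e}, x.1 = e₁ :=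
    fun x => (hr.new_edge_iff _).1 x.2
  have hkept : ∀ x, x ∉ r.DelE G g ↔ x ≠ g.fE e₀ := by simp [delE_eq_singleton hr.deleted_edge_iff]
  { eV := (Equiv.sumEmpty _ _).trans (Equiv.subtypeUnivEquiv hnotDel)
    eE := Equiv.ofBijective (Sum.elim Subtype.val fun _ => g.fE e₀) <| by
      refine ⟨?_, fun e => ?_⟩
      · rintro (x | x) (y | y) hxy
        · exact congrArg Sum.inl (Subtype.ext hxy)
        · exact ((hkept x).1 x.2 hxy).elim
        · exact ((hkept y).1 y.2 hxy.symm).elim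
        · exact congrArg Sum.inr (Subtype.ext ((hx₁ x).trans (hx₁ y).symm))
      · by_cases he : e = g.fE e₀
        · exact ⟨.inr ⟨e₁, (hr.new_edge_iff e₁).2 rfl⟩, he.symm⟩
        · exact ⟨.inl ⟨e, (hkept e).2 he⟩, rfl⟩
    src := by
      rintro (x | x)
      · rfl
      · obtain ⟨k, hkL, hkR⟩ := hr.src
        rw [result_s_inr h x (hkR.trans (congrArg r.R.s (hx₁ x).symm))]
        exact (congrArg g.fV hkL).trans (g.src e₀)
    tgt := by
      rintro (x | x)
      · rfl
      · obtain ⟨k, hkL, hkR⟩ := hr.tgt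
        rw [result_t_inr h x (hkR.trans (congrArg r.R.t (hx₁ x).symm))]
        exact (congrArg g.fV hkL).trans (g.tgt e₀) }

theorem isTree_result_iff : IsTree (r.result G g h) ↔ IsTree G := (hr.shapeEquiv h).isTree_iff

end ReplacesEdge

end Rule

theorem r0_prunesLeaf : r0.PrunesLeaf () := by
  unfold r0 incL0 incR0
  constructor <;> decide

theorem r1_prunesLeaf : r1.PrunesLeaf () := by
  unfold r1 incL1 incR0
  constructor <;> decide

theorem r2_replacesEdge : r2.ReplacesEdge () () := by
  unfold r2 incL2 incR2
  constructor <;> decide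

theorem isTree_result_iff_of_mem_treeRules {r : Rule NodeLab Unit} (hr : r ∈ TreeRules)
    {G : GTGraph NodeLab Unit} {g : Morphism r.L G} (h : r.Applicable G g) :
    IsTree (r.result G g h) ↔ IsTree G := by
  rcases hr with rfl | rfl | rfl
  · exact r0_prunesLeaf.isTree_result_iff h
  · exact r1_prunesLeaf.isTree_result_iff h
  · exact r2_replacesEdge.isTree_result_iff h

theorem tree_step_preservation_general (G H : GTGraph NodeLab Unit)
    (hstep : GTStep TreeRules G H) :
    (IsTree G → IsTree H) ∧ (¬ IsTree G → ¬ IsTree H) := by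
  obtain ⟨r, hr, g, h, ⟨i⟩⟩ := hstep
  have hiff : IsTree G ↔ IsTree H :=
    (isTree_result_iff_of_mem_treeRules hr h).symm.trans i.toShapeEquiv.isTree_iff
  exact ⟨hiff.mp, mt hiff.mpr⟩

/-- In the tree-recognition system, a direct derivation sends trees to trees
and non-trees to non-trees. -/
theorem tree_step_preservation (G H : GTGraph NodeLab Unit)
    (hG : G.IsTLRG) (hH : H.IsTLRG)
    (hstep : GTStep TreeRules G H) :
    (IsTree G → IsTree H) ∧ (¬ IsTree G → ¬ IsTree H) :=
  tree_step_preservation_general G H hstep
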